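/- Let v, k, λ be positive integers with 3 ≤ k < v, and let r, d be the integers with λ(v−1) = r(k−1) + d and 0 ≤ d < k−1. If d < r − λ, then every (v,k,λ)-packing has at most ⌊v(r−1)/(k−1)⌋ blocks. -/

import Mathlib

/-!
Double counting gives `r_u (k - 1) = ∑_{w ≠ u} λ_{uw} ≤ λ (v - 1) < (r + 1) (k - 1)` for the
replication number `r_u` of a point `u`, so `r_u ≤ r`, and `b k = ∑ r_u ≤ v (r - 1) + |S|` where
`S` is the set of points with `r_u = r`. It remains to see `|S| ≤ b`. The incidence vectors of the
points of `S` live in `ℚ^b` and their Gram matrix has entries `λ_{uw}`, with diagonal `r` and row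
deficiencies `∑_{w ≠ u} (λ - λ_{uw}) ≤ d`, since over all points `w ≠ u` the sum is exactly `d`.
Writing it as `λ J - D`, the AM-GM bound
`gᵀ D g ≤ (λ - r + d) |g|²` makes it positive definite when `d < r - λ`, so those vectors are
linearly independent.
-/

open Finset

section QuadraticForm

variable {ι K : Type*} [Field K] [LinearOrder K] [IsStrictOrderedRing K]

theorem sum_sum_mul_mul_le_sum_sq_mul_sum (S : Finset ι) (D : ι → ι → K)
    (hsymm : ∀ x y, D x y = D y x) (hD : ∀ x y, x ≠ y → 0 ≤ D x y) (g : ι → K) :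
    ∑ x ∈ S, ∑ y ∈ S, g x * g y * D x y ≤ ∑ x ∈ S, g x ^ 2 * ∑ y ∈ S, D x y := by
  have hsq : 0 ≤ ∑ x ∈ S, ∑ y ∈ S, (g x - g y) ^ 2 * D x y := by
    refine sum_nonneg fun x _ => sum_nonneg fun y _ => ?_
    rcases eq_or_ne x y with rfl | hxy
    · simp
    · exact mul_nonneg (sq_nonneg _) (hD x y hxy)
  have hswap : ∑ x ∈ S, ∑ y ∈ S, g y ^ 2 * D x y = ∑ x ∈ S, ∑ y ∈ S, g x ^ 2 * D x y := by
    rw [sum_comm]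
    simp_rw [hsymm]
  have hexpand : ∑ x ∈ S, ∑ y ∈ S, (g x - g y) ^ 2 * D x y =
      ∑ x ∈ S, ∑ y ∈ S, g x ^ 2 * D x y + ∑ x ∈ S, ∑ y ∈ S, g y ^ 2 * D x y
        - 2 * ∑ x ∈ S, ∑ y ∈ S, g x * g y * D x y := by
    simp only [mul_sum, ← sum_add_distrib, ← sum_sub_distrib]
    exact sum_congr rfl fun x _ => sum_congr rfl fun y _ => by ring
  simp only [mul_sum]
  linarith

theorem sum_sum_mul_mul_pos_of_sum_erase_sub_le [DecidableEq ι] (S : Finset ι) (M : ι → ι → K)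
    {r l d : K}
    (hsymm : ∀ x y, M x y = M y x) (hoff : ∀ x y, x ≠ y → M x y ≤ l)
    (hdiag : ∀ x ∈ S, M x x = r) (hrow : ∀ x ∈ S, ∑ y ∈ S.erase x, (l - M x y) ≤ d)
    (hl : 0 ≤ l) (hdr : d + l < r) (g : ι → K) (hg : ∃ x ∈ S, g x ≠ 0) :
    0 < ∑ x ∈ S, ∑ y ∈ S, g x * g y * M x y := by
  obtain ⟨x₀, hx₀, hgx₀⟩ := hg
  set A := ∑ x ∈ S, g x ^ 2
  have hA : 0 < A := sum_pos' (fun x _ => sq_nonneg (g x)) ⟨x₀, hx₀, by positivity⟩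
  have hrowD : ∀ x ∈ S, ∑ y ∈ S, (l - M x y) ≤ l - r + d := fun x hx => by
    rw [← add_sum_erase S _ hx, hdiag x hx]
    linarith [hrow x hx]
  have hamgm := sum_sum_mul_mul_le_sum_sq_mul_sum S (fun x y => l - M x y)
    (fun x y => by rw [hsymm]) (fun x y hxy => sub_nonneg.2 (hoff x y hxy)) g
  have hbound : ∑ x ∈ S, g x ^ 2 * ∑ y ∈ S, (l - M x y) ≤ (l - r + d) * A := by
    rw [mul_sum]
    exact sum_le_sum fun x hx => by
      rw [mul_comm (l - r + d)]
      exact mul_le_mul_of_nonneg_left (hrowD x hx) (sq_nonneg _)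
  have hsplit : ∑ x ∈ S, ∑ y ∈ S, g x * g y * M x y =
      l * (∑ x ∈ S, g x) ^ 2 - ∑ x ∈ S, ∑ y ∈ S, g x * g y * (l - M x y) := by
    rw [sq, sum_mul_sum]
    simp only [mul_sum, ← sum_sub_distrib]
    exact sum_congr rfl fun x _ => sum_congr rfl fun y _ => by ring
  nlinarith [mul_nonneg hl (sq_nonneg (∑ x ∈ S, g x))]

end QuadraticForm

theorem linearIndepOn_of_sum_sum_dotProduct_ne_zero {ι β K : Type*} [Fintype β] [Field K]
    (w : ι → β → K) (S : Finset ι)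
    (h : ∀ g : ι → K, (∃ x ∈ S, g x ≠ 0) → ∑ x ∈ S, ∑ y ∈ S, g x * g y * (w x ⬝ᵥ w y) ≠ 0) :
    LinearIndepOn K w S := by
  rw [linearIndepOn_finset_iff]
  intro g hg
  by_contra! hne
  refine h g hne ?_
  have hgram : ∑ x ∈ S, ∑ y ∈ S, g x * g y * (w x ⬝ᵥ w y) =
      (∑ x ∈ S, g x • w x) ⬝ᵥ (∑ y ∈ S, g y • w y) := by
    simp only [sum_dotProduct, dotProduct_sum, smul_dotProduct, dotProduct_smul, smul_eq_mul,
      mul_sum]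
    exact sum_congr rfl fun x _ => sum_congr rfl fun y _ => by rw [dotProduct_comm (w y)]; ring
  rw [hgram, hg, zero_dotProduct]

section Packing

variable {α β : Type*} [DecidableEq α] [Fintype β] (B : β → Finset α)

def replication (u : α) : ℕ := #{i | u ∈ B i}

def pairCount (u w : α) : ℕ := #{i | u ∈ B i ∧ w ∈ B i}

def incidence (K : Type*) [Zero K] [One K] (u : α) : β → K := fun i => if u ∈ B i then 1 else 0

theorem pairCount_comm (u w : α) : pairCount B u w = pairCount B w u := by
  simp only [pairCount, and_comm]

theorem pairCount_self (u : α) : pairCount B u u = replication B u := by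
  simp only [pairCount, replication, and_self]

theorem incidence_dotProduct_incidence {K : Type*} [NonAssocSemiring K] (u w : α) :
    incidence B K u ⬝ᵥ incidence B K w = pairCount B u w := by
  rw [pairCount, card_filter, Nat.cast_sum]
  refine sum_congr rfl fun i _ => ?_
  by_cases hu : u ∈ B i <;> by_cases hw : w ∈ B i <;> simp [incidence, hu, hw]

variable {B} {k : ℕ}

theorem sum_replication [Fintype α] (hB : ∀ i, #(B i) = k) :
    ∑ u, replication B u = Fintype.card β * k := by
  simp only [replication, card_filter]
  rw [sum_comm]
  simp [hB]

theorem sum_pairCount_erase [Fintype α] (hB : ∀ i, #(B i) = k) (u : α) :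
    ∑ w ∈ univ.erase u, pairCount B u w = replication B u * (k - 1) := by
  simp only [pairCount, replication, card_filter]
  rw [sum_comm, sum_mul]
  refine sum_congr rfl fun i _ => ?_
  by_cases hu : u ∈ B i
  · simp only [hu, true_and, if_true, one_mul]
    rw [← card_filter, ← hB i, ← card_erase_of_mem hu]
    congr 1
    ext w
    simp [and_comm]
  · simp [hu]

variable [Fintype α] {l r d : ℕ}

theorem replication_le (hB : ∀ i, #(B i) = k)
    (hpack : ∀ u w, u ≠ w → pairCount B u w ≤ l)
    (hrd : l * (Fintype.card α - 1) = r * (k - 1) + d) (hd : d < k - 1) (u : α) :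
    replication B u ≤ r := by
  have hsum : replication B u * (k - 1) ≤ l * (Fintype.card α - 1) := by
    calc replication B u * (k - 1) = ∑ w ∈ univ.erase u, pairCount B u w :=
          (sum_pairCount_erase hB u).symm
      _ ≤ ∑ w ∈ univ.erase u, l := sum_le_sum fun w hw => hpack u w (ne_of_mem_erase hw).symm
      _ = l * (Fintype.card α - 1) := by
          rw [sum_const, card_erase_of_mem (mem_univ u), card_univ, smul_eq_mul, mul_comm]
  have hlt : replication B u * (k - 1) < (r + 1) * (k - 1) := by
    rw [add_one_mul]
    omega
  exact Nat.le_of_lt_succ (Nat.lt_of_mul_lt_mul_right hlt)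

theorem sum_erase_sub_pairCount {K : Type*} [CommRing K] (hB : ∀ i, #(B i) = k)
    (hrd : l * (Fintype.card α - 1) = r * (k - 1) + d) {u : α} (hu : replication B u = r) :
    ∑ w ∈ univ.erase u, ((l : K) - pairCount B u w) = d := by
  rw [sum_sub_distrib, sum_const, card_erase_of_mem (mem_univ u), card_univ, nsmul_eq_mul,
    ← Nat.cast_sum, sum_pairCount_erase hB u, hu]
  have hrdK := congrArg (Nat.cast : ℕ → K) hrd
  simp only [Nat.cast_mul, Nat.cast_add] at hrdK ⊢
  linear_combination hrdK

theorem card_filter_replication_eq_le (hB : ∀ i, #(B i) = k)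
    (hpack : ∀ u w, u ≠ w → pairCount B u w ≤ l)
    (hrd : l * (Fintype.card α - 1) = r * (k - 1) + d) (hdr : d + l < r) :
    #{u | replication B u = r} ≤ Fintype.card β := by
  set S : Finset α := {u | replication B u = r}
  have hrow : ∀ u ∈ S, ∑ w ∈ S.erase u, ((l : ℚ) - pairCount B u w) ≤ d := fun u hu => by
    rw [← sum_erase_sub_pairCount hB hrd (mem_filter.1 hu).2]
    refine sum_le_sum_of_subset_of_nonneg (erase_subset_erase u (subset_univ S)) fun w hw _ => ?_
    exact sub_nonneg.2 (by exact_mod_cast hpack u w (ne_of_mem_erase hw).symm)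
  have hind : LinearIndepOn ℚ (incidence B ℚ) (S : Set α) := by
    refine linearIndepOn_of_sum_sum_dotProduct_ne_zero _ S fun g hg => ?_
    simp only [incidence_dotProduct_incidence]
    refine (sum_sum_mul_mul_pos_of_sum_erase_sub_le S (fun u w => (pairCount B u w : ℚ))
      (fun u w => ?_) (fun u w huw => ?_) (fun u hu => ?_) hrow (Nat.cast_nonneg l)
      (show (d : ℚ) + l < r by exact_mod_cast hdr) g hg).ne'
    · rw [pairCount_comm]
    · exact_mod_cast hpack u w huw
    · rw [pairCount_self, (mem_filter.1 hu).2]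
  simpa using hind.fintype_card_le_finrank

theorem card_mul_le (hB : ∀ i, #(B i) = k)
    (hpack : ∀ u w, u ≠ w → pairCount B u w ≤ l)
    (hrd : l * (Fintype.card α - 1) = r * (k - 1) + d) (hd : d < k - 1) (hdr : d + l < r) :
    Fintype.card β * (k - 1) ≤ Fintype.card α * (r - 1) := by
  have hS := card_filter_replication_eq_le hB hpack hrd hdr
  have hrep : ∀ u, replication B u ≤ (r - 1) + if replication B u = r then 1 else 0 := fun u => by
    have := replication_le hB hpack hrd hd u
    split_ifs <;> omega
  have hcount : Fintype.card β * k ≤ Fintype.card α * (r - 1) + #{u | replication B u = r} := by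
    calc Fintype.card β * k = ∑ u, replication B u := (sum_replication hB).symm
      _ ≤ ∑ u, ((r - 1) + if replication B u = r then 1 else 0) := sum_le_sum fun u _ => hrep u
      _ = Fintype.card α * (r - 1) + #{u | replication B u = r} := by
          rw [sum_add_distrib, sum_const, card_univ, smul_eq_mul, sum_boole, Nat.cast_id]
  have hk : Fintype.card β * k = Fintype.card β * (k - 1) + Fintype.card β := by
    rw [← mul_add_one, Nat.sub_add_cancel (by omega)]
  omega

end Packing

theorem Multiset.countP_eq_card_filter_univ {γ : Type*} [DecidableEq γ] (s : Multiset γ)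
    (p : γ → Prop) [DecidablePred p] : s.countP p = #{x : s | p x} := by
  conv_lhs => rw [← Multiset.map_univ_coe s]
  rw [Multiset.countP_map]
  rfl

theorem stmt_11_general (v k l r d : ℕ)
    (hrd : l * (v - 1) = r * (k - 1) + d) (hd : d < k - 1) (hdr : d + l < r)
    (𝓑 : Multiset (Finset (Fin v)))
    (hblocks : ∀ b ∈ 𝓑, b.card = k)
    (hpack : ∀ u w : Fin v, u ≠ w → 𝓑.countP (fun b => u ∈ b ∧ w ∈ b) ≤ l) :
    (Multiset.card 𝓑 : ℤ) ≤ (⌊(v * ((r : ℚ) - 1)) / (k - 1)⌋ : ℤ) := by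
  -- Blocks are indexed by the type `𝓑`, so that repeated blocks count separately.
  have hcard := card_mul_le (B := fun b : 𝓑 => (b : Finset (Fin v)))
    (fun b => hblocks b (Multiset.coe_mem))
    (fun u w huw => (Multiset.countP_eq_card_filter_univ 𝓑 _).symm.trans_le (hpack u w huw))
    (by rwa [Fintype.card_fin]) hd hdr
  rw [Multiset.card_coe, Fintype.card_fin] at hcard
  have hcardℚ : ((Multiset.card 𝓑 * (k - 1) : ℕ) : ℚ) ≤ (v * (r - 1) : ℕ) := by
    exact_mod_cast hcard
  rw [Nat.cast_mul, Nat.cast_mul, Nat.cast_sub (by omega), Nat.cast_sub (by omega),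
    Nat.cast_one] at hcardℚ
  have hk : (1 : ℚ) < k := by exact_mod_cast (by omega : 1 < k)
  rw [Int.le_floor, Int.cast_natCast, le_div_iff₀ (sub_pos.2 hk)]
  exact hcardℚ

theorem stmt_11 (v k l r d : ℕ) (hl : 0 < l) (hk : 3 ≤ k) (hkv : k < v)
    (hrd : l * (v - 1) = r * (k - 1) + d) (hd : d < k - 1) (hdr : d + l < r)
    (𝓑 : Multiset (Finset (Fin v)))
    (hblocks : ∀ b ∈ 𝓑, b.card = k)
    (hpack : ∀ u w : Fin v, u ≠ w → 𝓑.countP (fun b => u ∈ b ∧ w ∈ b) ≤ l) :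
    (Multiset.card 𝓑 : ℤ) ≤ (⌊(v * ((r : ℚ) - 1)) / (k - 1)⌋ : ℤ) :=
  stmt_11_general v k l r d hrd hd hdr 𝓑 hblocks hpack
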